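/- arXiv:1807.05634 — 4 statements merged into one kernel-verified Lean document; each statement's English description precedes it below -/
import Mathlib

section
/- Suppose for each element T of a finite collection 𝒯 and v in a space V we have ‖w‖²_{T₁} ≤ C(‖w‖²_{T₂} + ‖[w]_P‖²_P) whenever P = T₁ ∪ T₂ is a patch of two elements, where [w]_P denotes the difference of the polynomial extensions. Then, if every element T₁ with small intersection is paired with a 'fat' element T₂ on which ‖w‖_{T₂} ≤ C'‖w‖_{T₂ ∩ Ω}, summing over a collection of patches with uniformly bounded overlap yields ‖w‖²_{𝒯} ≤ C'' (‖w‖²_Ω + Σ_P ‖[w]_P‖²_P). -/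
/-! Every element is bounded by its fat partner plus the jump across their common patch; the fat
partner is bounded by its part inside `Ω`, and bounded overlap of the patches adds those parts up to
a multiple of the norm on `Ω`. -/

open Finset

section GhostPenalty

variable {ι : Type*} {s : Finset ι}

theorem sum_le_mul_sum_add_sum {a b j : ι → ℝ} {C : ℝ} (h : ∀ i ∈ s, a i ≤ C * (b i + j i)) :
    ∑ i ∈ s, a i ≤ C * (∑ i ∈ s, b i + ∑ i ∈ s, j i) := by
  rw [← sum_add_distrib, mul_sum]
  exact sum_le_sum h

theorem sum_le_mul_mul_of_le_mul {b c : ι → ℝ} {C K x : ℝ} (hC : 0 ≤ C)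
    (h : ∀ i ∈ s, b i ≤ C * c i) (hsum : ∑ i ∈ s, c i ≤ K * x) :
    ∑ i ∈ s, b i ≤ C * K * x :=
  calc ∑ i ∈ s, b i ≤ ∑ i ∈ s, C * c i := sum_le_sum h
    _ = C * ∑ i ∈ s, c i := (mul_sum ..).symm
    _ ≤ C * (K * x) := mul_le_mul_of_nonneg_left hsum hC
    _ = C * K * x := (mul_assoc ..).symm

end GhostPenalty

theorem le_mul_max_one_mul_add {a b j x C D : ℝ} (hC : 0 ≤ C) (hx : 0 ≤ x) (hj : 0 ≤ j)
    (ha : a ≤ C * (b + j)) (hb : b ≤ D * x) :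
    a ≤ C * max D 1 * (x + j) :=
  calc a ≤ C * (D * x + j) := ha.trans (by gcongr)
    _ ≤ C * (max D 1 * x + max D 1 * j) := by
        gcongr
        · exact le_max_left D 1
        · exact le_mul_of_one_le_left hj (le_max_right D 1)
    _ = C * max D 1 * (x + j) := by ring

theorem stmt_8_general {ι W : Type*} (𝒯 : Finset ι)
    (nT nΩT J : W → ι → ℝ) (nΩ : W → ℝ) (f : ι → ι)
    (C C' K : ℝ) (hC : 0 ≤ C) (hC' : 0 ≤ C')
    (hnonnegJ : ∀ w T, 0 ≤ J w T)
    (hnonnegΩ : ∀ w, 0 ≤ nΩ w)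
    (hlocal : ∀ w, ∀ T ∈ 𝒯, nT w T ≤ C * (nT w (f T) + J w T))
    (hfat : ∀ w, ∀ T ∈ 𝒯, nT w (f T) ≤ C' * nΩT w (f T))
    (hoverlap : ∀ w, ∑ T ∈ 𝒯, nΩT w (f T) ≤ K * nΩ w) :
    ∃ C'' : ℝ, 0 ≤ C'' ∧ ∀ w, ∑ T ∈ 𝒯, nT w T ≤ C'' * (nΩ w + ∑ T ∈ 𝒯, J w T) := by
  refine ⟨C * max (C' * K) 1, by positivity, fun w => ?_⟩
  exact le_mul_max_one_mul_add hC (hnonnegΩ w) (sum_nonneg fun T _ => hnonnegJ w T)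
    (sum_le_mul_sum_add_sum (hlocal w)) (sum_le_mul_mul_of_le_mul hC' (hfat w) (hoverlap w))

theorem stmt_8 {ι W : Type*} (𝒯 : Finset ι)
    (nT nΩT J : W → ι → ℝ) (nΩ : W → ℝ) (f : ι → ι)
    (C C' K : ℝ) (hC : 0 ≤ C) (hC' : 0 ≤ C') (hK : 0 ≤ K)
    (hnonnegT : ∀ w T, 0 ≤ nT w T) (hnonnegJ : ∀ w T, 0 ≤ J w T)
    (hnonnegΩ : ∀ w, 0 ≤ nΩ w)
    (hlocal : ∀ w, ∀ T ∈ 𝒯, nT w T ≤ C * (nT w (f T) + J w T))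
    (hfat : ∀ w, ∀ T ∈ 𝒯, nT w (f T) ≤ C' * nΩT w (f T))
    (hoverlap : ∀ w, ∑ T ∈ 𝒯, nΩT w (f T) ≤ K * nΩ w) :
    ∃ C'' : ℝ, 0 ≤ C'' ∧ ∀ w, ∑ T ∈ 𝒯, nT w T ≤ C'' * (nΩ w + ∑ T ∈ 𝒯, J w T) :=
  stmt_8_general 𝒯 nT nΩT J nΩ f C C' K hC hC' hnonnegJ hnonnegΩ hlocal hfat hoverlap
end

section
/- Let f, g be polynomials of degree ≤ p on ℝ and let T₁ = [0,1], T₂ = [1,2]. Then ‖f‖²_{L²(T₁)} ≤ C(p) (‖g‖²_{L²(T₂)} + ‖f - g‖²_{L²(T₁ ∪ T₂)}) for a constant C(p) depending only on p. -/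
open MeasureTheory Polynomial Set

noncomputable def Qf (n : ℕ) (a b : ℝ) (c : Fin n → ℝ) : ℝ :=
  ∫ x in a..b, (∑ i : Fin n, c i * x ^ (i : ℕ)) ^ 2

lemma Qf_eq (n : ℕ) (a b : ℝ) (c : Fin n → ℝ) :
    Qf n a b c = ∑ i : Fin n, ∑ j : Fin n,
      c i * c j * ∫ x in a..b, x ^ ((i : ℕ) + (j : ℕ)) := by
  unfold Qf
  have h : ∀ x : ℝ, (∑ i : Fin n, c i * x ^ (i : ℕ)) ^ 2
      = ∑ i : Fin n, ∑ j : Fin n, c i * c j * x ^ ((i : ℕ) + (j : ℕ)) := by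
    intro x
    rw [sq, Finset.sum_mul_sum]
    refine Finset.sum_congr rfl fun i _ => Finset.sum_congr rfl fun j _ => ?_
    rw [pow_add]; ring
  simp_rw [h]
  rw [intervalIntegral.integral_finset_sum]
  · refine Finset.sum_congr rfl fun i _ => ?_
    rw [intervalIntegral.integral_finset_sum]
    · exact Finset.sum_congr rfl fun j _ => intervalIntegral.integral_const_mul _ _
    · intro j _
      exact (continuous_const.mul (continuous_pow _)).intervalIntegrable _ _
  · intro i _
    apply Continuous.intervalIntegrable
    exact continuous_finset_sum _ fun j _ => continuous_const.mul (continuous_pow _)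

lemma Qf_cont (n : ℕ) (a b : ℝ) : Continuous (Qf n a b) := by
  have : Qf n a b = fun c => ∑ i : Fin n, ∑ j : Fin n,
      c i * c j * ∫ x in a..b, x ^ ((i : ℕ) + (j : ℕ)) := funext (Qf_eq n a b)
  rw [this]
  exact continuous_finset_sum _ fun i _ => continuous_finset_sum _ fun j _ =>
    ((continuous_apply i).mul (continuous_apply j)).mul continuous_const

lemma Qf_smul (n : ℕ) (a b t : ℝ) (c : Fin n → ℝ) :
    Qf n a b (t • c) = t ^ 2 * Qf n a b c := by
  unfold Qf
  have h : ∀ x : ℝ, (∑ i : Fin n, (t • c) i * x ^ (i : ℕ)) ^ 2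
      = t ^ 2 * (∑ i : Fin n, c i * x ^ (i : ℕ)) ^ 2 := by
    intro x
    have : ∑ i : Fin n, (t • c) i * x ^ (i : ℕ)
        = t * ∑ i : Fin n, c i * x ^ (i : ℕ) := by
      rw [Finset.mul_sum]
      exact Finset.sum_congr rfl fun i _ => by simp [mul_assoc]
    rw [this]; ring
  simp_rw [h]
  exact intervalIntegral.integral_const_mul _ _

lemma Qf_nonneg (n : ℕ) (a b : ℝ) (hab : a ≤ b) (c : Fin n → ℝ) : 0 ≤ Qf n a b c :=
  intervalIntegral.integral_nonneg hab fun x _ => sq_nonneg _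

lemma Qf_pos (n : ℕ) {c : Fin n → ℝ} (hc : c ≠ 0) : 0 < Qf n 1 2 c := by
  set q : Polynomial ℝ := ∑ i : Fin n, C (c i) * X ^ (i : ℕ) with hq
  have heval : ∀ x : ℝ, q.eval x = ∑ i : Fin n, c i * x ^ (i : ℕ) := by
    intro x; simp [hq, eval_finset_sum]
  have hqne : q ≠ 0 := by
    obtain ⟨i, hi⟩ := Function.ne_iff.mp hc
    intro h
    have : q.coeff i = c i := by
      simp only [hq, finset_sum_coeff, coeff_C_mul, coeff_X_pow]
      rw [Finset.sum_eq_single i]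
      · simp
      · intro j _ hj
        simp [Fin.val_eq_val, Ne.symm hj]
      · simp
    rw [h, coeff_zero] at this
    exact hi this.symm
  have hcontq : Continuous fun x : ℝ => q.eval x ^ 2 := by continuity
  have hInt : IntervalIntegrable (fun x => q.eval x ^ 2) volume 1 2 :=
    hcontq.intervalIntegrable _ _
  have key : (0 : ℝ) < ∫ x in (1:ℝ)..2, q.eval x ^ 2 := by
    rw [intervalIntegral.integral_pos_iff_support_of_nonneg_ae'
      (Filter.Eventually.of_forall fun x => sq_nonneg _) hInt]
    refine ⟨one_lt_two, ?_⟩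
    rw [pos_iff_ne_zero]
    intro h0
    have hroots : (volume {x : ℝ | q.IsRoot x}) = 0 :=
      (Polynomial.finite_setOf_isRoot hqne).measure_zero _
    have hsub : Ioc (1:ℝ) 2 ⊆ (Function.support (fun x => q.eval x ^ 2) ∩ Ioc 1 2)
        ∪ {x : ℝ | q.IsRoot x} := by
      intro x hx
      by_cases hx0 : q.eval x = 0
      · exact Or.inr hx0
      · exact Or.inl ⟨by simp [Function.mem_support, pow_eq_zero_iff, hx0], hx⟩
    have hle : volume (Ioc (1:ℝ) 2) ≤
        volume (Function.support (fun x => q.eval x ^ 2) ∩ Ioc 1 2)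
          + volume {x : ℝ | q.IsRoot x} :=
      (measure_mono hsub).trans (measure_union_le _ _)
    rw [h0, hroots, Real.volume_Ioc] at hle
    norm_num at hle
  have : Qf n 1 2 c = ∫ x in (1:ℝ)..2, q.eval x ^ 2 := by
    unfold Qf
    exact intervalIntegral.integral_congr fun x _ => by rw [heval]
  rw [this]; exact key

lemma exists_K (p : ℕ) : ∃ K : ℝ, 0 ≤ K ∧
    ∀ c : Fin (p + 1) → ℝ, Qf (p + 1) 0 1 c ≤ K * Qf (p + 1) 1 2 c := by
  set n := p + 1 with hn
  have hS : IsCompact (Metric.sphere (0 : Fin n → ℝ) 1) := isCompact_sphere _ _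
  have hSne : (Metric.sphere (0 : Fin n → ℝ) 1).Nonempty :=
    NormedSpace.sphere_nonempty.mpr zero_le_one
  obtain ⟨u, huS, hmin⟩ := hS.exists_isMinOn hSne (Qf_cont n 1 2).continuousOn
  obtain ⟨v, hvS, hmax⟩ := hS.exists_isMaxOn hSne (Qf_cont n 0 1).continuousOn
  have hu0 : u ≠ 0 := by
    intro h; rw [h] at huS; simp at huS
  have hm : 0 < Qf n 1 2 u := Qf_pos n hu0
  have hM : 0 ≤ Qf n 0 1 v := Qf_nonneg n 0 1 zero_le_one v
  refine ⟨Qf n 0 1 v / Qf n 1 2 u, div_nonneg hM hm.le, fun c => ?_⟩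
  by_cases hc : c = 0
  · subst hc; simp [Qf]
  · set t := ‖c‖ with hts
    have ht : 0 < t := norm_pos_iff.mpr hc
    set w := t⁻¹ • c with hw
    have hwS : w ∈ Metric.sphere (0 : Fin n → ℝ) 1 := by
      simp only [mem_sphere_iff_norm, sub_zero, hw, norm_smul]
      rw [norm_inv, norm_norm, ← hts, inv_mul_cancel₀ ht.ne']
    have hcw : c = t • w := by
      rw [hw, smul_smul, mul_inv_cancel₀ ht.ne', one_smul]
    have h1 : Qf n 0 1 c = t ^ 2 * Qf n 0 1 w := by rw [hcw, Qf_smul]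
    have h2 : Qf n 1 2 c = t ^ 2 * Qf n 1 2 w := by rw [hcw, Qf_smul]
    have h3 : Qf n 0 1 w ≤ Qf n 0 1 v := hmax hwS
    have h4 : Qf n 1 2 u ≤ Qf n 1 2 w := hmin hwS
    rw [h1, h2, div_mul_eq_mul_div, le_div_iff₀ hm]
    nlinarith [sq_nonneg t, Qf_nonneg n 0 1 zero_le_one w,
      Qf_nonneg n 1 2 one_le_two w, mul_le_mul_of_nonneg_left h4
        (mul_nonneg (sq_nonneg t) hM), mul_le_mul_of_nonneg_right
        (mul_le_mul_of_nonneg_left h3 (sq_nonneg t)) hm.le]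

theorem stmt_9 (p : ℕ) :
    ∃ C : ℝ, 0 < C ∧ ∀ f g : Polynomial ℝ, f.degree ≤ p → g.degree ≤ p →
      (∫ x in (0:ℝ)..1, (f.eval x) ^ 2) ≤
        C * ((∫ x in (1:ℝ)..2, (g.eval x) ^ 2) +
          ∫ x in (0:ℝ)..2, (f.eval x - g.eval x) ^ 2) := by
  obtain ⟨K, hK0, hK⟩ := exists_K p
  refine ⟨2 * K + 2, by linarith, fun f g hf hg => ?_⟩
  have rep : ∀ h : Polynomial ℝ, h.degree ≤ (p : WithBot ℕ) → ∀ x : ℝ,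
      h.eval x = ∑ i : Fin (p + 1), h.coeff i * x ^ (i : ℕ) := by
    intro h hd x
    rw [Polynomial.eval_eq_sum_range'
      (Nat.lt_succ_of_le (Polynomial.natDegree_le_iff_degree_le.mpr hd))]
    exact (Fin.sum_univ_eq_sum_range _ _).symm
  have intc : ∀ (q : Polynomial ℝ) (a b : ℝ),
      IntervalIntegrable (fun x => (q.eval x) ^ 2) volume a b :=
    fun q a b => (q.continuous.pow 2).intervalIntegrable _ _
  have hev : ∀ x : ℝ, f.eval x - g.eval x = (f - g).eval x := fun x => (eval_sub _ _ _).symm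
  simp_rw [hev]
  have hfg : (f - g).degree ≤ (p : WithBot ℕ) := le_trans (degree_sub_le f g) (max_le hf hg)
  -- the norm equivalence for g
  have hB : (∫ x in (0:ℝ)..1, (g.eval x) ^ 2) ≤ K * ∫ x in (1:ℝ)..2, (g.eval x) ^ 2 := by
    have e1 : (∫ x in (0:ℝ)..1, (g.eval x) ^ 2) = Qf (p + 1) 0 1 (fun i => g.coeff i) :=
      intervalIntegral.integral_congr fun x _ => by rw [rep g hg x]
    have e2 : (∫ x in (1:ℝ)..2, (g.eval x) ^ 2) = Qf (p + 1) 1 2 (fun i => g.coeff i) :=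
      intervalIntegral.integral_congr fun x _ => by rw [rep g hg x]
    rw [e1, e2]; exact hK _
  -- pointwise bound and monotonicity
  have hA : (∫ x in (0:ℝ)..1, (f.eval x) ^ 2) ≤
      2 * (∫ x in (0:ℝ)..1, ((f - g).eval x) ^ 2) + 2 * ∫ x in (0:ℝ)..1, (g.eval x) ^ 2 := by
    have hmono : (∫ x in (0:ℝ)..1, (f.eval x) ^ 2) ≤
        ∫ x in (0:ℝ)..1, (2 * ((f - g).eval x) ^ 2 + 2 * (g.eval x) ^ 2) := by
      apply intervalIntegral.integral_mono_on zero_le_one (intc f 0 1)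
      · exact ((continuous_const.mul ((f - g).continuous.pow 2)).add
          (continuous_const.mul (g.continuous.pow 2))).intervalIntegrable _ _
      · intro x _
        simp only [eval_sub]
        nlinarith [sq_nonneg (f.eval x - 2 * g.eval x)]
    rw [intervalIntegral.integral_add (f := fun x => (2:ℝ) * ((f - g).eval x) ^ 2)
        (g := fun x => (2:ℝ) * (g.eval x) ^ 2)
        ((continuous_const.mul ((f - g).continuous.pow 2)).intervalIntegrable _ _)
        ((continuous_const.mul (g.continuous.pow 2)).intervalIntegrable _ _),
      intervalIntegral.integral_const_mul, intervalIntegral.integral_const_mul] at hmono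
    exact hmono
  have hsplit := intervalIntegral.integral_add_adjacent_intervals
    (intc (f - g) 0 1) (intc (f - g) 1 2)
  have h12 : (0:ℝ) ≤ ∫ x in (1:ℝ)..2, ((f - g).eval x) ^ 2 :=
    intervalIntegral.integral_nonneg one_le_two fun x _ => sq_nonneg _
  have hI2 : (0:ℝ) ≤ ∫ x in (1:ℝ)..2, (g.eval x) ^ 2 :=
    intervalIntegral.integral_nonneg one_le_two fun x _ => sq_nonneg _
  have hI01 : (0:ℝ) ≤ ∫ x in (0:ℝ)..1, ((f - g).eval x) ^ 2 :=
    intervalIntegral.integral_nonneg zero_le_one fun x _ => sq_nonneg _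
  nlinarith [mul_nonneg hK0 hI2, mul_nonneg hK0 h12, mul_nonneg hK0 hI01]
end

section
/- Let f be a polynomial of degree ≤ p on the interval [0, h] with h > 0. Then |f(0)|² ≤ C(p) h⁻¹ ‖f‖²_{L²([0,h])}, where the constant C(p) depends only on the degree p; i.e., the endpoint value of a polynomial is bounded by h^{-1/2} times its L² norm. -/
open MeasureTheory Polynomial Set

private theorem key_trace (p : ℕ) : ∃ C : ℝ, 0 < C ∧ ∀ g : Polynomial ℝ, g.degree ≤ p →
    (g.eval 0) ^ 2 ≤ C * ∫ x in (0:ℝ)..1, (g.eval x) ^ 2 := by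
  classical
  set V := Polynomial.degreeLT ℝ (p+1) with hV
  have hint : ∀ f g : Polynomial ℝ, IntervalIntegrable
      (fun x => f.eval x * g.eval x) volume 0 1 :=
    fun f g => ((f.continuous_aeval).mul (g.continuous_aeval)).intervalIntegrable 0 1
  let core : InnerProductSpace.Core ℝ V :=
  { inner := fun f g => ∫ x in (0:ℝ)..1, f.1.eval x * g.1.eval x
    conj_inner_symm := by
      intro f g
      simp only [starRingEnd_apply, star_trivial]
      exact intervalIntegral.integral_congr (fun x _ => mul_comm _ _)
    re_inner_nonneg := by
      intro f
      simp only [RCLike.re_to_real]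
      exact intervalIntegral.integral_nonneg (by norm_num)
        (fun x _ => mul_self_nonneg _)
    definite := by
      intro f hf
      have hae := (intervalIntegral.integral_eq_zero_iff_of_le_of_nonneg_ae
        (by norm_num : (0:ℝ) ≤ 1)
        (Filter.Eventually.of_forall fun x => mul_self_nonneg (f.1.eval x))
        (hint f.1 f.1)).1 hf
      have hnull : volume.restrict (Set.Ioc (0:ℝ) 1)
          {x | ¬ f.1.eval x = 0} = 0 := by
        refine ae_iff.1 ?_
        filter_upwards [hae] with x hx
        exact mul_self_eq_zero.1 (by simpa using hx)
      have hzero : f.1 = 0 := by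
        apply Polynomial.eq_zero_of_infinite_isRoot
        by_contra hfin
        rw [Set.not_infinite] at hfin
        have h1 : volume.restrict (Set.Ioc (0:ℝ) 1) {x | f.1.IsRoot x} = 0 :=
          measure_mono_null (fun x hx => hx) (hfin.measure_zero _)
        have h2 : volume.restrict (Set.Ioc (0:ℝ) 1) Set.univ = 0 := by
          have hsub : (Set.univ : Set ℝ) ⊆
              {x | f.1.IsRoot x} ∪ {x | ¬ f.1.eval x = 0} := by
            intro x _
            by_cases hx : f.1.eval x = 0
            · exact Or.inl hx
            · exact Or.inr hx
          exact measure_mono_null hsub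
            (le_antisymm (le_trans (measure_union_le _ _) (by rw [h1, hnull]; simp))
              (zero_le))
        rw [Measure.restrict_apply_univ] at h2
        simp [Real.volume_Ioc] at h2
      exact Subtype.ext hzero
    add_left := by
      intro x y z
      simp only [Submodule.coe_add]
      rw [show (∫ t in (0:ℝ)..1, (x.1 + y.1).eval t * z.1.eval t)
          = ∫ t in (0:ℝ)..1, (x.1.eval t * z.1.eval t + y.1.eval t * z.1.eval t) from
        intervalIntegral.integral_congr (fun t _ => by simp [add_mul])]
      exact intervalIntegral.integral_add (hint x.1 z.1) (hint y.1 z.1)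
    smul_left := by
      intro x y r
      simp only [starRingEnd_apply, star_trivial, SetLike.val_smul]
      rw [show (∫ t in (0:ℝ)..1, (r • x.1).eval t * y.1.eval t)
          = ∫ t in (0:ℝ)..1, r * (x.1.eval t * y.1.eval t) from
        intervalIntegral.integral_congr (fun t _ => by simp [mul_assoc])]
      exact intervalIntegral.integral_const_mul r _ }
  letI : NormedAddCommGroup V := core.toNormedAddCommGroup
  letI : InnerProductSpace ℝ V := InnerProductSpace.ofCore core.toCore
  haveI : FiniteDimensional ℝ V := (Polynomial.degreeLTEquiv ℝ (p+1)).symm.finiteDimensional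
  let E : V →ₗ[ℝ] ℝ :=
  { toFun := fun f => f.1.eval 0
    map_add' := fun x y => by simp
    map_smul' := fun r x => by simp }
  let E' : V →L[ℝ] ℝ := LinearMap.toContinuousLinearMap E
  refine ⟨‖E'‖ ^ 2 + 1, by positivity, ?_⟩
  intro g hg
  have hgV : g ∈ V := Polynomial.mem_degreeLT.2
    (lt_of_le_of_lt hg (by exact_mod_cast Nat.lt_succ_self p))
  set gV : V := ⟨g, hgV⟩ with hgVdef
  have h1 : ‖E' gV‖ ≤ ‖E'‖ * ‖gV‖ := E'.le_opNorm gV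
  have h2 : (g.eval 0) ^ 2 ≤ ‖E'‖ ^ 2 * ‖gV‖ ^ 2 := by
    have := mul_self_le_mul_self (norm_nonneg (E' gV)) h1
    calc (g.eval 0) ^ 2 = ‖E' gV‖ ^ 2 := by
          simp [E', E, Real.norm_eq_abs, sq_abs, gV]
      _ ≤ (‖E'‖ * ‖gV‖) ^ 2 := by
          rw [sq, sq]; exact this
      _ = ‖E'‖ ^ 2 * ‖gV‖ ^ 2 := by ring
  have h3 : ‖gV‖ ^ 2 = ∫ x in (0:ℝ)..1, (g.eval x) ^ 2 := by
    rw [← real_inner_self_eq_norm_sq]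
    show (∫ x in (0:ℝ)..1, g.eval x * g.eval x) = _
    exact intervalIntegral.integral_congr (fun x _ => (sq (g.eval x)).symm)
  have h4 : 0 ≤ ∫ x in (0:ℝ)..1, (g.eval x) ^ 2 :=
    intervalIntegral.integral_nonneg (by norm_num) (fun x _ => sq_nonneg _)
  calc (g.eval 0) ^ 2 ≤ ‖E'‖ ^ 2 * ∫ x in (0:ℝ)..1, (g.eval x) ^ 2 := by rw [← h3]; exact h2
    _ ≤ (‖E'‖ ^ 2 + 1) * ∫ x in (0:ℝ)..1, (g.eval x) ^ 2 := by nlinarith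

theorem stmt_10 (p : ℕ) :
    ∃ C : ℝ, 0 < C ∧ ∀ h : ℝ, 0 < h → ∀ f : Polynomial ℝ, f.degree ≤ p →
      (f.eval 0) ^ 2 ≤ C * h⁻¹ * ∫ x in (0:ℝ)..h, (f.eval x) ^ 2 := by
  obtain ⟨C, hC, hkey⟩ := key_trace p
  refine ⟨C, hC, ?_⟩
  intro h hh f hf
  set g := f.comp (Polynomial.C h * Polynomial.X) with hgdef
  have heval : ∀ t : ℝ, g.eval t = f.eval (h * t) := by
    intro t; simp [hgdef]
  have hdeg : g.degree ≤ p := by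
    refine le_trans g.degree_le_natDegree ?_
    have h1 : g.natDegree ≤ f.natDegree * (Polynomial.C h * Polynomial.X).natDegree :=
      Polynomial.natDegree_comp_le
    rw [Polynomial.natDegree_C_mul_X h (ne_of_gt hh), mul_one] at h1
    have h2 : f.natDegree ≤ p := Polynomial.natDegree_le_iff_degree_le.2 hf
    exact_mod_cast le_trans h1 h2
  have hint : (∫ x in (0:ℝ)..1, (g.eval x) ^ 2)
      = h⁻¹ * ∫ x in (0:ℝ)..h, (f.eval x) ^ 2 := by
    have := intervalIntegral.integral_comp_mul_left (a := 0) (b := 1)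
      (fun x => (f.eval x) ^ 2) (ne_of_gt hh)
    simp only [mul_zero, mul_one, smul_eq_mul] at this
    calc (∫ x in (0:ℝ)..1, (g.eval x) ^ 2)
        = ∫ x in (0:ℝ)..1, (f.eval (h * x)) ^ 2 :=
          intervalIntegral.integral_congr (fun x _ => by rw [heval])
      _ = h⁻¹ * ∫ x in (0:ℝ)..h, (f.eval x) ^ 2 := this
  have := hkey g hdeg
  rw [hint] at this
  calc (f.eval 0) ^ 2 = (g.eval 0) ^ 2 := by rw [heval 0, mul_zero]
    _ ≤ C * (h⁻¹ * ∫ x in (0:ℝ)..h, (f.eval x) ^ 2) := this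
    _ = C * h⁻¹ * ∫ x in (0:ℝ)..h, (f.eval x) ^ 2 := by ring
end

section
/- If α > 0, C₂, C₃ ≥ 0, and nonnegative reals U, S satisfy: A(v, v) ≥ α U² and A(v, w₂) ≥ (1/2)S² − C₃U² with |||w₂||| ≤ C₂√(U² + S²), then for w₃ = v + δ α w₂ with δ = min(1, α/(2C₃·α + 1))·(1/2): A(v, w₃) ≥ (α/2)·min(1, δ)·(U² + S²) ≥ β √(U²+S²)·|||w₃||| where |||w₃||| ≤ (1 + δαC₂)√(U²+S²), for an explicit β = β(α, C₂, C₃) > 0. -/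
/-! Testing `v` against `w₃ = v + δ α w₂` adds the coercivity `α U²` of `A(v, v)` to `δ α` times
the streamline bound `S²/2 - C₃ U²`; for `δ (1 + 2 C₃) ≤ 2` the negative `U²` term is absorbed,
leaving `A(v, w₃) ≥ (δ α / 2)(U² + S²)`. Dividing by the bound `(1 + δ α C₂) √(U² + S²)` on
`|||w₃|||` gives the inf-sup constant `β = δ α / (2 (1 + δ α C₂))`. -/

theorem combined_test_coercive {α δ C₃ U S Avv Avw2 : ℝ} (hα : 0 ≤ α) (hδ : 0 ≤ δ)
    (hδC₃ : δ * (1 + 2 * C₃) ≤ 2) (hvv : α * U ^ 2 ≤ Avv)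
    (hvw2 : (1 / 2) * S ^ 2 - C₃ * U ^ 2 ≤ Avw2) :
    δ * α / 2 * (U ^ 2 + S ^ 2) ≤ Avv + δ * α * Avw2 := by
  have hscaled : δ * α * ((1 / 2) * S ^ 2 - C₃ * U ^ 2) ≤ δ * α * Avw2 :=
    mul_le_mul_of_nonneg_left hvw2 (mul_nonneg hδ hα)
  have habsorb : 0 ≤ (2 - δ * (1 + 2 * C₃)) * α * U ^ 2 :=
    mul_nonneg (mul_nonneg (sub_nonneg.2 hδC₃) hα) (sq_nonneg U)
  linear_combination hvv + hscaled + habsorb / 2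

theorem div_mul_sqrt_mul_le_of_le_mul_sqrt {c K Q n : ℝ} (hc : 0 ≤ c) (hK : 0 < K)
    (hQ : 0 ≤ Q) (hn : n ≤ K * √Q) : c / K * √Q * n ≤ c * Q := by
  calc c / K * √Q * n ≤ c / K * √Q * (K * √Q) := by gcongr
    _ = c * (√Q * √Q) := by field_simp
    _ = c * Q := by rw [Real.mul_self_sqrt hQ]

theorem stmt_15 (α C₂ C₃ : ℝ) (hα : 0 < α) (hC₂ : 0 ≤ C₂) (hC₃ : 0 ≤ C₃) :
    ∃ δ β : ℝ, 0 < δ ∧ 0 < β ∧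
      ∀ U S Avv Avw2 nw2 nw3 : ℝ, 0 ≤ U → 0 ≤ S → 0 ≤ nw2 → 0 ≤ nw3 →
        α * U ^ 2 ≤ Avv → (1 / 2) * S ^ 2 - C₃ * U ^ 2 ≤ Avw2 →
        nw2 ≤ C₂ * Real.sqrt (U ^ 2 + S ^ 2) →
        nw3 ≤ (1 + δ * α * C₂) * Real.sqrt (U ^ 2 + S ^ 2) →
        β * Real.sqrt (U ^ 2 + S ^ 2) * nw3 ≤ Avv + δ * α * Avw2 := by
  set δ : ℝ := 1 / (1 + 2 * C₃)
  have hδ : 0 < δ := by positivity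
  have hδC₃ : δ * (1 + 2 * C₃) ≤ 2 := by
    rw [one_div_mul_cancel (by positivity)]; norm_num
  refine ⟨δ, δ * α / 2 / (1 + δ * α * C₂), hδ, by positivity, ?_⟩
  intro U S Avv Avw2 nw2 nw3 _ _ _ _ hvv hvw2 _ hnw3
  calc δ * α / 2 / (1 + δ * α * C₂) * √(U ^ 2 + S ^ 2) * nw3
      ≤ δ * α / 2 * (U ^ 2 + S ^ 2) :=
        div_mul_sqrt_mul_le_of_le_mul_sqrt (by positivity) (by positivity) (by positivity) hnw3
    _ ≤ Avv + δ * α * Avw2 := combined_test_coercive hα.le hδ.le hδC₃ hvv hvw2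
end
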